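/- arXiv:1409.1684 — 5 statements merged into one kernel-verified Lean document; each statement's English description precedes it below -/
import Mathlib

section
/- For |q| < 1 and |x| < 1, the infinite q-Pochhammer symbol satisfies 1/(x;q)_∞ = ∑_{k=0}^∞ x^k / (q;q)_k (Euler's identity). -/
/-! Write `e_q(y) = ∑ y^k / (q;q)_k`. Comparing coefficients gives `e_q(q y) = (1 - y) e_q(y)`,
hence `e_q(q^n x) = (x;q)_n e_q(x)`. As `n → ∞` the left side tends to `e_q(0) = 1` by continuity
of `e_q` on the unit disc, and the right side to `(x;q)_∞ e_q(x)`, so this product is `1`. -/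

/-- The finite q-Pochhammer symbol `(a;q)_k`. -/
def qPoch (a q : ℝ) (k : ℕ) : ℝ := ∏ i ∈ Finset.range k, (1 - a * q ^ i)

/-- The infinite q-Pochhammer symbol `(x;q)_∞ = ∏_{j≥0} (1 - x q^j)`. -/
noncomputable def qPochInf (x q : ℝ) : ℝ := ∏' j : ℕ, (1 - x * q ^ j)

open Filter Topology

lemma qPoch_zero (a q : ℝ) : qPoch a q 0 = 1 := Finset.prod_range_zero _

lemma qPoch_succ (a q : ℝ) (k : ℕ) : qPoch a q (k + 1) = qPoch a q k * (1 - a * q ^ k) :=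
  Finset.prod_range_succ _ _

lemma one_sub_mul_pow_ne_zero {q : ℝ} (hq : |q| < 1) (k : ℕ) : 1 - q * q ^ k ≠ 0 := by
  rw [← pow_succ', sub_ne_zero, ne_comm]
  refine ne_of_apply_ne abs (ne_of_lt ?_)
  rw [abs_pow, abs_one]
  exact pow_lt_one₀ (abs_nonneg q) hq k.succ_ne_zero

lemma qPoch_self_ne_zero {q : ℝ} (hq : |q| < 1) (k : ℕ) : qPoch q q k ≠ 0 :=
  Finset.prod_ne_zero_iff.2 fun i _ ↦ one_sub_mul_pow_ne_zero hq i

lemma tendsto_qPoch_qPochInf {q : ℝ} (hq : |q| < 1) (a : ℝ) :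
    Tendsto (qPoch a q) atTop (𝓝 (qPochInf a q)) := by
  have hsum : Summable fun j : ℕ ↦ -(a * q ^ j) :=
    ((summable_geometric_of_abs_lt_one hq).mul_left a).neg
  have hmul : Multipliable fun j : ℕ ↦ 1 - a * q ^ j := by
    simpa only [← sub_eq_add_neg] using Real.multipliable_one_add_of_summable hsum
  exact hmul.hasProd.tendsto_prod_nat

noncomputable def qExp (q y : ℝ) : ℝ := ∑' k : ℕ, y ^ k / qPoch q q k

section qExp

variable {q : ℝ}

lemma summable_pow_div_qPoch (hq : |q| < 1) {y : ℝ} (hy : |y| < 1) :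
    Summable fun k : ℕ ↦ y ^ k / qPoch q q k := by
  have hratio : Tendsto (fun k : ℕ ↦ |y| / |1 - q * q ^ k|) atTop (𝓝 |y|) := by
    have hqk : Tendsto (fun k : ℕ ↦ q * q ^ k) atTop (𝓝 0) := by
      simpa using (tendsto_pow_atTop_nhds_zero_of_abs_lt_one hq).const_mul q
    simpa [div_eq_mul_inv] using ((hqk.const_sub 1).abs.inv₀ (by norm_num)).const_mul |y|
  obtain ⟨r, hyr, hr⟩ := exists_between hy
  refine summable_of_ratio_norm_eventually_le hr ?_
  filter_upwards [hratio.eventually (gt_mem_nhds hyr)] with k hk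
  simp only [Real.norm_eq_abs]
  calc |y ^ (k + 1) / qPoch q q (k + 1)|
      = |y| / |1 - q * q ^ k| * |y ^ k / qPoch q q k| := by
        rw [qPoch_succ, pow_succ, abs_div, abs_div, abs_mul, abs_mul]; ring
    _ ≤ r * |y ^ k / qPoch q q k| := by gcongr

lemma hasSum_qExp (hq : |q| < 1) {y : ℝ} (hy : |y| < 1) :
    HasSum (fun k : ℕ ↦ y ^ k / qPoch q q k) (qExp q y) :=
  (summable_pow_div_qPoch hq hy).hasSum

lemma qExp_zero (q : ℝ) : qExp q 0 = 1 := by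
  rw [qExp, tsum_eq_single 0 fun k hk ↦ by simp [hk], pow_zero, qPoch_zero, div_one]

lemma continuousOn_qExp (hq : |q| < 1) : ContinuousOn (qExp q) (Metric.ball 0 1) := by
  intro y hy
  rw [mem_ball_zero_iff, Real.norm_eq_abs] at hy
  obtain ⟨r, hyr, hr⟩ := exists_between hy
  have hcont : ContinuousOn (qExp q) (Metric.closedBall 0 r) := by
    have hr' : |r| < 1 := abs_lt.2 ⟨by linarith [abs_nonneg y], hr⟩
    refine continuousOn_tsum (fun k ↦ by fun_prop) (summable_pow_div_qPoch hq hr').abs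
      fun k z hz ↦ ?_
    rw [mem_closedBall_zero_iff, Real.norm_eq_abs] at hz
    rw [Real.norm_eq_abs, abs_div, abs_div, abs_pow, abs_pow]
    exact div_le_div_of_nonneg_right (pow_le_pow_left₀ (abs_nonneg z) (hz.trans (le_abs_self r)) k)
      (abs_nonneg _)
  exact (hcont.continuousAt (Metric.closedBall_mem_nhds_of_mem (by simpa using hyr)))
    |>.continuousWithinAt

lemma qExp_mul_left (hq : |q| < 1) {y : ℝ} (hy : |y| < 1) :
    qExp q (q * y) = (1 - y) * qExp q y := by
  have hqy : |q * y| < 1 := by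
    rw [abs_mul]; exact mul_lt_one_of_nonneg_of_lt_one_left (abs_nonneg q) hq hy.le
  have hstep : ∀ k : ℕ, y ^ (k + 1) / qPoch q q (k + 1) - (q * y) ^ (k + 1) / qPoch q q (k + 1)
      = y * (y ^ k / qPoch q q k) := by
    intro k
    have := qPoch_self_ne_zero hq k
    have := one_sub_mul_pow_ne_zero hq k
    rw [qPoch_succ]
    field_simp
    ring
  have hdiff : HasSum (fun k ↦ y ^ k / qPoch q q k - (q * y) ^ k / qPoch q q k)
      (y * qExp q y) := by
    rw [← hasSum_nat_add_iff' 1]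
    simpa [hstep] using (hasSum_qExp hq hy).mul_left y
  linear_combination hdiff.unique ((hasSum_qExp hq hy).sub (hasSum_qExp hq hqy))

lemma qExp_pow_mul (hq : |q| < 1) {x : ℝ} (hx : |x| < 1) (n : ℕ) :
    qExp q (q ^ n * x) = qPoch x q n * qExp q x := by
  induction n with
  | zero => rw [pow_zero, one_mul, qPoch_zero, one_mul]
  | succ n ih =>
    have hqnx : |q ^ n * x| < 1 := by
      rw [abs_mul, abs_pow]
      exact mul_lt_one_of_nonneg_of_lt_one_right (pow_le_one₀ (abs_nonneg q) hq.le)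
        (abs_nonneg x) hx
    rw [pow_succ', mul_assoc, qExp_mul_left hq hqnx, ih, qPoch_succ]
    ring

end qExp

/-- Euler's identity: `1/(x;q)_∞ = ∑_{k≥0} x^k / (q;q)_k` for `|q| < 1`, `|x| < 1`. -/
theorem euler_qExp (q x : ℝ) (hq : |q| < 1) (hx : |x| < 1) :
    1 / qPochInf x q = ∑' k : ℕ, x ^ k / qPoch q q k := by
  have hqnx : Tendsto (fun n : ℕ ↦ q ^ n * x) atTop (𝓝 0) := by
    simpa using (tendsto_pow_atTop_nhds_zero_of_abs_lt_one hq).mul_const x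
  have hlim : Tendsto (fun n ↦ qPoch x q n * qExp q x) atTop (𝓝 1) := by
    have hcont := (continuousOn_qExp hq).continuousAt (Metric.ball_mem_nhds 0 one_pos)
    simpa only [Function.comp_def, qExp_pow_mul hq hx, qExp_zero] using hcont.tendsto.comp hqnx
  have hprod : qPochInf x q * qExp q x = 1 :=
    tendsto_nhds_unique ((tendsto_qPoch_qPochInf hq x).mul_const _) hlim
  exact (eq_one_div_of_mul_eq_one_right hprod).symm
end

section
/- Let 0 < q < 1, let ν be a nonnegative integer, and set c_j = 1/(q;q)_{ν+j}. Define the shift operator Ê by Ê c_j = c_{j+1} and D̂^k = (Ê-1)(Ê-q)···(Ê-q^{k-1}). Then D̂^k c_0 = q^{k(k+ν)}/(q;q)_{k+ν} for every nonnegative integer k. -/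
/-- The operator `D̂^k = (Ê-1)(Ê-q)⋯(Ê-q^{k-1})` where `Ê` is the shift `(Ê c)_j = c_{j+1}`. -/
def Dhat (q : ℝ) : ℕ → (ℕ → ℝ) → (ℕ → ℝ)
  | 0, c => c
  | k + 1, c => fun j => Dhat q k c (j + 1) - q ^ k * Dhat q k c j

lemma qPoch_self_succ (q : ℝ) (n : ℕ) :
    qPoch q q (n + 1) = qPoch q q n * (1 - q ^ (n + 1)) := by
  rw [qPoch, Finset.prod_range_succ, pow_succ' q n]
  rfl

lemma qPoch_self_pos {q : ℝ} (hq0 : 0 ≤ q) (hq1 : q < 1) (n : ℕ) : 0 < qPoch q q n :=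
  Finset.prod_pos fun i _ => by
    rw [← pow_succ']
    exact sub_pos.mpr (pow_lt_one₀ hq0 hq1 i.succ_ne_zero)

lemma one_div_qPoch_self_succ_sub {q : ℝ} {n : ℕ} (h : qPoch q q (n + 1) ≠ 0) :
    1 / qPoch q q (n + 1) - 1 / qPoch q q n = q ^ (n + 1) / qPoch q q (n + 1) := by
  rw [qPoch_self_succ] at h ⊢
  have hn : qPoch q q n ≠ 0 := left_ne_zero_of_mul h
  have hf : 1 - q ^ (n + 1) ≠ 0 := right_ne_zero_of_mul h
  field_simp
  ring

lemma Dhat_one_div_qPoch_self {q : ℝ} (hq : ∀ n, qPoch q q n ≠ 0) (ν k j : ℕ) :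
    Dhat q k (fun j => 1 / qPoch q q (ν + j)) j
      = q ^ (k * (k + ν + j)) / qPoch q q (k + ν + j) := by
  induction k generalizing j with
  | zero => simp [Dhat, Nat.add_comm ν j]
  | succ k ih =>
    set N := k + ν + j
    have hN : k + 1 + ν + j = N + 1 := by omega
    calc Dhat q k (fun j => 1 / qPoch q q (ν + j)) (j + 1)
          - q ^ k * Dhat q k (fun j => 1 / qPoch q q (ν + j)) j
        = q ^ (k * (N + 1)) * (1 / qPoch q q (N + 1) - 1 / qPoch q q N) := by
          rw [ih, ih, show k + ν + (j + 1) = N + 1 by omega]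
          ring
      _ = q ^ ((k + 1) * (k + 1 + ν + j)) / qPoch q q (k + 1 + ν + j) := by
          rw [one_div_qPoch_self_succ_sub (hq _), hN]
          ring

/-- For `c_j = 1/(q;q)_{ν+j}` one has `D̂^k c_0 = q^{k(k+ν)}/(q;q)_{k+ν}`. -/
theorem Dhat_qPochInv (q : ℝ) (hq0 : 0 < q) (hq1 : q < 1) (ν : ℕ) (k : ℕ) :
    Dhat q k (fun j => 1 / qPoch q q (ν + j)) 0 = q ^ (k * (k + ν)) / qPoch q q (k + ν) :=
  Dhat_one_div_qPoch_self (fun n => (qPoch_self_pos hq0.le hq1 n).ne') ν k 0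
end

section
/- Define φ_ν(n) = n(n-2)/2 - ν²/2, ψ(n) = n(n+ν-1), and g_ν : ℤ → ℚ by g_ν(n) = nν for n ≥ 1; g_ν(n) = ψ(n) for 0 ≥ n ≥ -ν; g_ν(n) = φ_ν(n) for n ≤ -ν-1 with n+ν even; and g_ν(n) = φ_ν(n) + 3/2 for n ≤ -ν-1 with n+ν odd, where ν is a fixed nonnegative integer. Then for all integers n and all positive integers k, l, the quantity g̃ = g_ν(n) + g_ν(n+2k+l) - g_ν(n+2k) - g_ν(n+l) satisfies g̃ = 0 if n ≥ 0 and g̃ > 0 if n ≤ -1. -/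
/-!
The combination is the mixed forward difference `Δ_[l] (Δ_[2k] g_ν) n`, which telescopes into a
double sum of the second differences `g_ν y + g_ν (y+3) - g_ν (y+1) - g_ν (y+2)` over the points
`y = n + i + 2j` with `i < l`, `j < k`. On `[0, ∞)` the function `g_ν` is linear, so these vanish.
Below `0`, `g_ν` is a quadratic of leading coefficient `1` on `[-ν, 1]` and `1/2` on `(-∞, -ν]`
(the parity correction has period `2` and cancels), so a window of four points inside one of
these pieces gives `4` or `2`, and the three windows straddling a junction give `1`, `2` and
`3` or `5`. Hence every term is nonnegative, and the term at `y = n` is positive when `n < 0`.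
-/

open Finset fwdDiff

section ForwardDifference

variable {M G : Type*} [AddCommMonoid M] [AddCommGroup G]

theorem fwdDiff_comm (a b : M) (f : M → G) : Δ_[a] (Δ_[b] f) = Δ_[b] (Δ_[a] f) := by
  ext y
  simp only [fwdDiff, add_right_comm y a b]
  abel

theorem fwdDiff_nsmul_eq_sum (m : ℕ) (h : M) (f : M → G) (y : M) :
    Δ_[m • h] f y = ∑ i ∈ range m, Δ_[h] f (y + i • h) := by
  simp only [fwdDiff, add_assoc, ← succ_nsmul]
  rw [sum_range_sub (fun i => f (y + i • h)), zero_smul, add_zero]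

theorem fwdDiff_nsmul_fwdDiff_nsmul_eq_sum (m k : ℕ) (a b : M) (f : M → G) (y : M) :
    Δ_[m • a] (Δ_[k • b] f) y =
      ∑ i ∈ range m, ∑ j ∈ range k, Δ_[a] (Δ_[b] f) (y + i • a + j • b) := by
  rw [fwdDiff_nsmul_eq_sum]
  refine sum_congr rfl fun i _ => ?_
  rw [fwdDiff_comm a (k • b), fwdDiff_nsmul_eq_sum, fwdDiff_comm b a]

theorem fwdDiff_nsmul_fwdDiff_nsmul_pos [PartialOrder G] [IsOrderedAddMonoid G]
    {m k : ℕ} (hm : 0 < m) (hk : 0 < k) {a b y : M} {f : M → G}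
    (hnonneg : ∀ z, 0 ≤ Δ_[a] (Δ_[b] f) z) (hpos : 0 < Δ_[a] (Δ_[b] f) y) :
    0 < Δ_[m • a] (Δ_[k • b] f) y := by
  rw [fwdDiff_nsmul_fwdDiff_nsmul_eq_sum]
  refine sum_pos' (fun i _ => sum_nonneg fun j _ => hnonneg _) ⟨0, mem_range.2 hm, ?_⟩
  exact sum_pos' (fun j _ => hnonneg _) ⟨0, mem_range.2 hk, by simpa using hpos⟩

theorem add_sub_sub_eq_fwdDiff_fwdDiff (f : M → G) (y a b : M) :
    f y + f (y + a + b) - f (y + a) - f (y + b) = Δ_[b] (Δ_[a] f) y := by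
  simp only [fwdDiff, add_right_comm y b a]
  abel

theorem fwdDiff_one_fwdDiff_two_eq (f : ℤ → G) (y : ℤ) :
    Δ_[1] (Δ_[2] f) y = f y + f (y + 3) - f (y + 1) - f (y + 2) := by
  rw [← add_sub_sub_eq_fwdDiff_fwdDiff, add_assoc, sub_right_comm]
  norm_num

end ForwardDifference

def gnu (ν : ℕ) (n : ℤ) : ℚ :=
  if 1 ≤ n then (n : ℚ) * ν
  else if -(ν : ℤ) ≤ n then (n : ℚ) * ((n : ℚ) + ν - 1)
  else if Even (n + ν) then (n : ℚ) * ((n : ℚ) - 2) / 2 - (ν : ℚ) ^ 2 / 2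
  else (n : ℚ) * ((n : ℚ) - 2) / 2 - (ν : ℚ) ^ 2 / 2 + 3 / 2

section Gnu

variable {ν : ℕ} {n y : ℤ}

theorem gnu_of_nonneg (hn : 0 ≤ n) : gnu ν n = n * ν := by
  rcases hn.eq_or_lt with rfl | hn
  · simp [gnu]
  · rw [gnu, if_pos (by omega)]

theorem gnu_of_neg_le_of_le_one (h₁ : -(ν : ℤ) ≤ n) (h₂ : n ≤ 1) :
    gnu ν n = n * (n + ν - 1) := by
  rcases h₂.eq_or_lt with rfl | h₂
  · simp [gnu]
  · rw [gnu, if_neg (by omega), if_pos h₁]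

theorem gnu_of_le_neg (hn : n ≤ -ν) :
    gnu ν n = n * (n - 2) / 2 - ν ^ 2 / 2 + if Even (n + ν) then 0 else 3 / 2 := by
  rcases hn.eq_or_lt with rfl | hn
  · rw [gnu_of_neg_le_of_le_one le_rfl (by omega), neg_add_cancel, if_pos Even.zero]
    push_cast
    ring
  · rw [gnu, if_neg (by omega), if_neg (by omega)]
    split_ifs <;> ring

theorem fwdDiff_fwdDiff_gnu_of_nonneg (hy : 0 ≤ y) : Δ_[1] (Δ_[2] (gnu ν)) y = 0 := by
  rw [fwdDiff_one_fwdDiff_two_eq, gnu_of_nonneg hy, gnu_of_nonneg (by omega),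
    gnu_of_nonneg (by omega), gnu_of_nonneg (by omega)]
  push_cast
  ring

theorem fwdDiff_fwdDiff_gnu_pos_of_neg_le (h₁ : -(ν : ℤ) ≤ y) (h₂ : y ≤ -1) :
    0 < Δ_[1] (Δ_[2] (gnu ν)) y := by
  rw [fwdDiff_one_fwdDiff_two_eq, gnu_of_neg_le_of_le_one h₁ (by omega),
    gnu_of_neg_le_of_le_one (n := y + 1) (by omega) (by omega),
    gnu_of_neg_le_of_le_one (n := y + 2) (by omega) (by omega)]
  rcases h₂.eq_or_lt with rfl | h₂
  · rw [gnu_of_nonneg (by omega)]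
    push_cast
    linarith
  · rw [gnu_of_neg_le_of_le_one (n := y + 3) (by omega) (by omega)]
    push_cast
    ring_nf
    norm_num

theorem fwdDiff_fwdDiff_gnu_pos_of_lt_neg (hy : y < -ν) : 0 < Δ_[1] (Δ_[2] (gnu ν)) y := by
  rw [fwdDiff_one_fwdDiff_two_eq]
  obtain rfl | rfl | hy : y = -ν - 1 ∨ y = -ν - 2 ∨ y + 3 ≤ -ν := by omega
  · rw [gnu_of_le_neg (by omega), gnu_of_neg_le_of_le_one (n := -ν - 1 + 1) (by omega) (by omega),
      gnu_of_neg_le_of_le_one (n := -ν - 1 + 2) (by omega) (by omega),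
      if_neg (by rw [Int.even_iff]; omega)]
    rcases Nat.eq_zero_or_pos ν with rfl | hν
    · norm_num [gnu_of_nonneg]
    · rw [gnu_of_neg_le_of_le_one (n := -ν - 1 + 3) (by omega) (by omega)]
      push_cast
      ring_nf
      norm_num
  · rw [gnu_of_le_neg (by omega), gnu_of_le_neg (n := -ν - 2 + 1) (by omega),
      gnu_of_le_neg (n := -ν - 2 + 2) (by omega),
      gnu_of_neg_le_of_le_one (n := -ν - 2 + 3) (by omega) (by omega),
      if_pos (by rw [Int.even_iff]; omega), if_neg (by rw [Int.even_iff]; omega),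
      if_pos (by rw [Int.even_iff]; omega)]
    push_cast
    ring_nf
    norm_num
  · rw [gnu_of_le_neg (by omega), gnu_of_le_neg (n := y + 1) (by omega),
      gnu_of_le_neg (n := y + 2) (by omega), gnu_of_le_neg (n := y + 3) (by omega)]
    rw [show y + 3 = y + 1 + 2 by ring]
    simp only [add_right_comm _ 2 (ν : ℤ), even_add_two]
    push_cast
    ring_nf
    norm_num

theorem fwdDiff_fwdDiff_gnu_pos (hy : y ≤ -1) : 0 < Δ_[1] (Δ_[2] (gnu ν)) y := by
  rcases lt_or_ge y (-ν) with h | h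
  · exact fwdDiff_fwdDiff_gnu_pos_of_lt_neg h
  · exact fwdDiff_fwdDiff_gnu_pos_of_neg_le h hy

theorem fwdDiff_fwdDiff_gnu_nonneg (y : ℤ) : 0 ≤ Δ_[1] (Δ_[2] (gnu ν)) y := by
  rcases lt_or_ge y 0 with h | h
  · exact (fwdDiff_fwdDiff_gnu_pos (by omega)).le
  · exact (fwdDiff_fwdDiff_gnu_of_nonneg h).ge

end Gnu

/-- For the leading q-exponent `g_ν` of the q-Bessel function `J_ν(q^n)`,
the combination `g̃ = g_ν(n) + g_ν(n+2k+l) - g_ν(n+2k) - g_ν(n+l)` vanishes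
for `n ≥ 0` and is strictly positive for `n ≤ -1`. -/
theorem gnu_combination (ν : ℕ) (g : ℤ → ℚ)
    (hg : ∀ n : ℤ, g n =
      if 1 ≤ n then (n : ℚ) * ν
      else if -(ν : ℤ) ≤ n then (n : ℚ) * ((n : ℚ) + ν - 1)
      else if Even (n + ν) then (n : ℚ) * ((n : ℚ) - 2) / 2 - (ν : ℚ) ^ 2 / 2
      else (n : ℚ) * ((n : ℚ) - 2) / 2 - (ν : ℚ) ^ 2 / 2 + 3 / 2) :
    ∀ n k l : ℤ, 0 < k → 0 < l →
      (0 ≤ n → g n + g (n + 2 * k + l) - g (n + 2 * k) - g (n + l) = 0) ∧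
      (n ≤ -1 → 0 < g n + g (n + 2 * k + l) - g (n + 2 * k) - g (n + l)) := by
  obtain rfl : g = gnu ν := funext hg
  intro n k l hk hl
  lift k to ℕ using hk.le
  lift l to ℕ using hl.le
  rw [add_sub_sub_eq_fwdDiff_fwdDiff, show (2 * k : ℤ) = k • 2 by simp [mul_comm],
    show (l : ℤ) = l • 1 by simp]
  refine ⟨fun hn => ?_, fun hn => ?_⟩
  · rw [fwdDiff_nsmul_fwdDiff_nsmul_eq_sum]
    exact sum_eq_zero fun i _ => sum_eq_zero fun j _ =>
      fwdDiff_fwdDiff_gnu_of_nonneg (by simp only [Int.nsmul_eq_mul]; omega)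
  · exact fwdDiff_nsmul_fwdDiff_nsmul_pos (by omega) (by omega) fwdDiff_fwdDiff_gnu_nonneg
      (fwdDiff_fwdDiff_gnu_pos hn)
end

section
/- For 0 < q < 1 and an integer n ≤ 0, the infinite product (-(1-q)²·q^{2n}; q²)_∞ satisfies 1/(-(1-q)²q^{2n}; q²)_∞ = q^{n(n-1)}·(1/2 + O(q)) as q → 0⁺; that is, q^{-n(n-1)}/(-(1-q)²q^{2n}; q²)_∞ → 1/2 as q → 0⁺. -/
/-!
Write `n = -m`. The first `m + 1` factors are `1 + (1-q)² q^{-2k}` for `k = 0, …, m`; pulling out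
`q^{-2k}` from each leaves `q^{-m(m+1)} ∏_{k ≤ m} (q^{2k} + (1-q)²)`, a product which is continuous
in `q` with value `2` at `q = 0` (only the factor `k = 0` differs from `1`). The tail
`∏_{k ≥ 1} (1 + (1-q)² q^{2k})` tends to `1` by dominated convergence for infinite products.
-/

open Filter Topology Finset

section NormedField

variable {𝕜 : Type*} [NormedField 𝕜] [CompleteSpace 𝕜]

lemma multipliable_one_add_mul_pow_succ (c : 𝕜) {r : 𝕜} (hr : ‖r‖ < 1) :
    Multipliable fun k : ℕ => 1 + c * r ^ (k + 1) := by
  refine multipliable_one_add_of_summable ?_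
  simpa [norm_mul, norm_pow, pow_succ, mul_comm, mul_left_comm, mul_assoc] using
    (summable_geometric_of_lt_one (norm_nonneg r) hr).mul_left (‖c‖ * ‖r‖)

lemma tendsto_tprod_one_add_mul_pow_succ {α : Type*} {l : Filter α} {c r : α → 𝕜} {a : 𝕜}
    (hc : Tendsto c l (𝓝 a)) (hr : Tendsto r l (𝓝 0)) :
    Tendsto (fun x => ∏' k : ℕ, (1 + c x * r x ^ (k + 1))) l (𝓝 1) := by
  have hbound : Summable fun k : ℕ => (‖a‖ + 1) * (1 / 2 : ℝ) ^ (k + 1) :=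
    ((summable_nat_add_iff 1).mpr summable_geometric_two).mul_left _
  have hlim (k : ℕ) : Tendsto (fun x => c x * r x ^ (k + 1)) l (𝓝 0) := by
    simpa using hc.mul (hr.pow (k + 1))
  have hdom : ∀ᶠ x in l, ∀ k : ℕ, ‖c x * r x ^ (k + 1)‖ ≤ (‖a‖ + 1) * (1 / 2 : ℝ) ^ (k + 1) := by
    filter_upwards [hc.norm.eventually (gt_mem_nhds (lt_add_one ‖a‖)),
      hr.norm.eventually (gt_mem_nhds (by norm_num : ‖(0 : 𝕜)‖ < 1 / 2))] with x hcx hrx k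
    rw [norm_mul, norm_pow]
    gcongr
  simpa using tendsto_tprod_one_add_of_dominated_convergence hbound hlim hdom

lemma prod_range_pow_two_mul {M : Type*} [CommMonoid M] (x : M) (m : ℕ) :
    ∏ k ∈ range (m + 1), x ^ (2 * k) = x ^ (m * (m + 1)) := by
  rw [prod_pow_eq_pow_sum, ← mul_sum, mul_comm, sum_range_id_mul_two, Nat.add_sub_cancel,
    mul_comm]

lemma pow_mul_prod_range_one_add_mul_zpow {K : Type*} [Field K] {q : K} (hq : q ≠ 0) (c : K)
    (m : ℕ) :
    q ^ (m * (m + 1)) * ∏ k ∈ range (m + 1), (1 + c * q ^ (-(2 * k : ℤ))) =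
      ∏ k ∈ range (m + 1), (q ^ (2 * k) + c) := by
  rw [← prod_range_pow_two_mul, ← prod_mul_distrib]
  refine prod_congr rfl fun k _ => ?_
  have : q ^ (2 * k) * q ^ (-(2 * k : ℤ)) = 1 := by
    rw [zpow_neg, ← zpow_natCast, Nat.cast_mul, Nat.cast_ofNat, mul_inv_cancel₀ (zpow_ne_zero _ hq)]
  linear_combination c * this

lemma tprod_one_add_mul_zpow_eq_prod_mul_tprod {q : 𝕜} (hq : ‖q‖ < 1) (c : 𝕜) (m : ℕ) :
    ∏' j : ℕ, (1 + c * q ^ (2 * -(m : ℤ) + 2 * (j : ℤ))) =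
      (∏ k ∈ range (m + 1), (1 + c * q ^ (-(2 * k : ℤ)))) *
        ∏' k : ℕ, (1 + c * (q ^ 2) ^ (k + 1)) := by
  have htail (k : ℕ) : q ^ (2 * -(m : ℤ) + 2 * ((k + (m + 1) : ℕ) : ℤ)) = (q ^ 2) ^ (k + 1) := by
    rw [← pow_mul, ← zpow_natCast]
    congr 1
    push_cast
    ring
  have hhead : ∀ k ∈ range (m + 1), q ^ (2 * -(m : ℤ) + 2 * ((m + 1 - 1 - k : ℕ) : ℤ)) =
      q ^ (-(2 * k : ℤ)) := by
    intro k hk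
    have : k ≤ m := Nat.lt_succ_iff.mp (mem_range.mp hk)
    rw [Nat.add_sub_cancel, Nat.cast_sub this]
    congr 1
    ring
  have hmult : Multipliable fun k : ℕ =>
      1 + c * q ^ (2 * -(m : ℤ) + 2 * ((k + (m + 1) : ℕ) : ℤ)) := by
    simp only [htail]
    exact multipliable_one_add_mul_pow_succ c (r := q ^ 2)
      (by rw [norm_pow]; nlinarith [norm_nonneg q, hq])
  rw [← Multipliable.prod_mul_tprod_nat_mul' (k := m + 1)
    (f := fun j : ℕ => 1 + c * q ^ (2 * -(m : ℤ) + 2 * (j : ℤ))) hmult, ← prod_range_reflect]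
  simp only [htail]
  congr 1
  exact prod_congr rfl fun k hk => by rw [hhead k hk]

end NormedField

/-- For an integer `n ≤ 0`, `q^{-n(n-1)} / (-(1-q)² q^{2n}; q²)_∞ → 1/2` as `q → 0⁺`. -/
theorem qPochInf_asymptotics (n : ℤ) (hn : n ≤ 0) :
    Filter.Tendsto (fun q : ℝ =>
        q ^ (-(n * (n - 1))) / ∏' j : ℕ, (1 + (1 - q) ^ 2 * q ^ (2 * n + 2 * (j : ℤ))))
      (nhdsWithin 0 (Set.Ioo 0 1)) (nhds (1 / 2)) := by
  obtain ⟨m, rfl⟩ : ∃ m : ℕ, n = -(m : ℤ) := ⟨n.natAbs, by omega⟩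
  set G : ℝ → ℝ := fun q => ∏ k ∈ range (m + 1), (q ^ (2 * k) + (1 - q) ^ 2)
  set T : ℝ → ℝ := fun q => ∏' k : ℕ, (1 + (1 - q) ^ 2 * (q ^ 2) ^ (k + 1))
  have hG : Tendsto G (𝓝[Set.Ioo 0 1] 0) (𝓝 2) := by
    have hG0 : G 0 = 2 := by norm_num [G, prod_range_succ']
    exact hG0 ▸ (by fun_prop : Continuous G).continuousWithinAt
  have hT : Tendsto T (𝓝[Set.Ioo 0 1] 0) (𝓝 1) :=
    tendsto_tprod_one_add_mul_pow_succ (a := 1)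
      (((continuous_const.sub continuous_id).pow 2).tendsto' 0 1 (by norm_num)
        |>.mono_left nhdsWithin_le_nhds)
      ((continuous_pow 2).tendsto' 0 0 (by norm_num) |>.mono_left nhdsWithin_le_nhds)
  have hF : ∀ q ∈ Set.Ioo (0 : ℝ) 1, q ^ (-(-(m : ℤ) * (-(m : ℤ) - 1))) /
      ∏' j : ℕ, (1 + (1 - q) ^ 2 * q ^ (2 * -(m : ℤ) + 2 * (j : ℤ))) = (G q * T q)⁻¹ := by
    rintro q ⟨hq0, hq1⟩
    have hexp : -(-(m : ℤ) * (-(m : ℤ) - 1)) = -((m * (m + 1) : ℕ) : ℤ) := by push_cast; ring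
    have hq : ‖q‖ < 1 := by rwa [Real.norm_of_nonneg hq0.le]
    rw [tprod_one_add_mul_zpow_eq_prod_mul_tprod hq, hexp, zpow_neg, zpow_natCast, show G q = _ from
        (pow_mul_prod_range_one_add_mul_zpow hq0.ne' ((1 - q) ^ 2) m).symm, mul_assoc, mul_inv,
      div_eq_mul_inv]
  have hlim := (hG.mul hT).inv₀ (by norm_num)
  rw [mul_one, ← one_div] at hlim
  exact hlim.congr' (eventually_nhdsWithin_of_forall fun q hq => (hF q hq).symm)
end

section
/- Let Q < 0 and ν ∈ ℤ_{≥0}. Define, for each integer n, the pair (β_n^ν, B_n^ν) by: (1, nνQ) for n ≥ 1; (1, n(n+ν-1)Q) for 0 ≥ n ≥ -ν; ((-1)^{(n+ν)/2}, (n(n-2)-ν²)Q/2) for n ≤ -ν-1 with n+ν even; and ((-1)^{(n+ν+1)/2}, (n(n-2)-ν²+3)Q/2) for n ≤ -ν-1 with n+ν odd. Then for every integer n, max[S(β_{n+1})+B_{n+1}, S(-β_n)+B_n-νQ, S(β_{n-1})+B_{n-1}+max(0,(2n-2)Q)] = max[S(-β_{n+1})+B_{n+1}, S(β_n)+B_n-νQ,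 S(-β_{n-1})+B_{n-1}+max(0,(2n-2)Q)], i.e., (β_n^ν, B_n^ν) solves the p-ultradiscrete Bessel equation. -/
/-!
In the parity-ultradiscrete equation a term `S(σ) + x` counts as `x` when `σ = 1` and vanishes
(is `⊥`) when `σ = -1`; every exponent occurs once on each side, with opposite signs. Hence both
sides equal the largest exponent `M` as soon as `M` is attained by two terms of opposite sign. For
the ultradiscrete Bessel function this happens in each of the regions `n > -ν`, `n = -ν` and
`n < -ν`: there two of the exponents `B_{n+1}`, `B_n - νQ`, `B_{n-1} + max(0, (2n-2)Q)` coincide,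
carry opposite signs and dominate the third, which is a direct computation from the closed forms
(`Q < 0` makes the comparisons go the right way).
-/

/-- The formal ultradiscrete sign function `S` with `S(1) = 0`, `S(-1) = -∞`. -/
noncomputable def Sud (x : ℤ) : EReal := if x = 1 then 0 else ⊥

lemma Sud_one : Sud 1 = 0 := if_pos rfl

lemma Sud_le_zero (s : ℤ) : Sud s ≤ 0 := by
  unfold Sud; split_ifs <;> simp

lemma max_max_Sud_add_eq {s₁ s₂ s₃ : ℤ} {x₁ x₂ x₃ m : ℝ} (h₁ : x₁ ≤ m) (h₂ : x₂ ≤ m)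
    (h₃ : x₃ ≤ m) (hm : s₁ = 1 ∧ x₁ = m ∨ s₂ = 1 ∧ x₂ = m ∨ s₃ = 1 ∧ x₃ = m) :
    max (max (Sud s₁ + (x₁ : EReal)) (Sud s₂ + (x₂ : EReal))) (Sud s₃ + (x₃ : EReal)) = m := by
  have hle (s : ℤ) {x : ℝ} (hx : x ≤ m) : Sud s + (x : EReal) ≤ m :=
    (add_le_of_nonpos_left (Sud_le_zero s)).trans (EReal.coe_le_coe_iff.mpr hx)
  refine le_antisymm (max_le (max_le (hle s₁ h₁) (hle s₂ h₂)) (hle s₃ h₃)) ?_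
  rcases hm with ⟨rfl, rfl⟩ | ⟨rfl, rfl⟩ | ⟨rfl, rfl⟩ <;> simp [Sud_one]

def udBesselSign (ν : ℕ) (n : ℤ) : ℤ :=
  if 1 ≤ n then 1
  else if -(ν : ℤ) ≤ n then 1
  else if Even (n + ν) then (((n + ν) / 2).negOnePow : ℤ)
  else (((n + ν + 1) / 2).negOnePow : ℤ)

noncomputable def udBesselAmp (Q : ℝ) (ν : ℕ) (n : ℤ) : ℝ :=
  if 1 ≤ n then ((n * ν : ℤ) : ℝ) * Q
  else if -(ν : ℤ) ≤ n then ((n * (n + ν - 1) : ℤ) : ℝ) * Q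
  else if Even (n + ν) then ((n * (n - 2) - (ν : ℤ) ^ 2 : ℤ) : ℝ) * Q / 2
  else ((n * (n - 2) - (ν : ℤ) ^ 2 + 3 : ℤ) : ℝ) * Q / 2

section
variable {ν : ℕ} {n : ℤ}

-- `/` rounds down, so the two parity branches of `β` merge, and the merged formula
-- still holds at `n = -ν`.
lemma udBesselSign_of_le (hn : n ≤ -ν) : udBesselSign ν n = ((n + ν + 1) / 2).negOnePow := by
  unfold udBesselSign
  split_ifs with h₁ h₂ h₃
  · omega
  · rw [show (n + ν + 1) / 2 = 0 by omega, Int.negOnePow_zero, Units.val_one]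
  · obtain ⟨k, hk⟩ := h₃
    rw [show (n + ν) / 2 = (n + ν + 1) / 2 by omega]
  · rfl

lemma udBesselSign_of_ge (hn : -(ν : ℤ) - 1 ≤ n) : udBesselSign ν n = 1 := by
  rcases (show n = -ν - 1 ∨ -(ν : ℤ) ≤ n by omega) with rfl | hn
  · rw [udBesselSign_of_le (by omega), show (-(ν : ℤ) - 1 + ν + 1) / 2 = 0 by omega,
      Int.negOnePow_zero, Units.val_one]
  · unfold udBesselSign; split_ifs <;> rfl

lemma udBesselSign_eq_one_or_neg_one (n : ℤ) : udBesselSign ν n = 1 ∨ udBesselSign ν n = -1 := by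
  rcases le_or_gt n (-ν) with hn | hn
  · rw [udBesselSign_of_le hn]
    rcases Int.units_eq_one_or ((n + ν + 1) / 2).negOnePow with h | h <;> simp [h]
  · exact Or.inl (udBesselSign_of_ge (by omega))

lemma udBesselSign_sub_one (hn : n ≤ -ν - 1) :
    udBesselSign ν (n - 1) = -udBesselSign ν (n + 1) := by
  rw [udBesselSign_of_le (by omega), udBesselSign_of_le (by omega),
    show (n + 1 + ν + 1) / 2 = (n - 1 + ν + 1) / 2 + 1 by omega, Int.negOnePow_succ,
    Units.val_neg, neg_neg]

end

section
variable {Q : ℝ} {ν : ℕ} {n : ℤ}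

lemma udBesselAmp_of_nonneg (hn : 0 ≤ n) : udBesselAmp Q ν n = n * ν * Q := by
  rcases (show 1 ≤ n ∨ n = 0 by omega) with h | rfl
  · rw [udBesselAmp, if_pos h]
    push_cast; ring
  · simp [udBesselAmp]

lemma udBesselAmp_of_mem_Icc (hn₁ : -(ν : ℤ) ≤ n) (hn₂ : n ≤ 1) :
    udBesselAmp Q ν n = n * (n + ν - 1) * Q := by
  unfold udBesselAmp
  split_ifs with h₁
  · obtain rfl : n = 1 := by omega
    push_cast; ring
  · push_cast; ring

lemma udBesselAmp_of_le (hn : n ≤ -ν) :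
    udBesselAmp Q ν n = (n * (n - 2) - ν ^ 2 + if Even (n + ν) then 0 else 3) * Q / 2 := by
  rcases hn.lt_or_eq with hn | rfl
  · rw [udBesselAmp, if_neg (by omega), if_neg (by omega)]
    split_ifs <;> push_cast <;> ring
  · rw [udBesselAmp_of_mem_Icc le_rfl (by omega), neg_add_cancel, if_pos Even.zero]
    push_cast
    ring

lemma udBesselAmp_rel_of_neg_lt (hQ : Q < 0) (hn : -(ν : ℤ) < n) :
    udBesselAmp Q ν (n - 1) + max 0 (((2 * n - 2 : ℤ) : ℝ) * Q) = udBesselAmp Q ν n - ν * Q ∧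
      udBesselAmp Q ν (n + 1) ≤ udBesselAmp Q ν n - ν * Q := by
  have hν : (0 : ℝ) ≤ ν := Nat.cast_nonneg ν
  rcases le_or_gt 1 n with h | h
  · have hn' : (1 : ℝ) ≤ n := by exact_mod_cast h
    rw [udBesselAmp_of_nonneg (by omega), udBesselAmp_of_nonneg (by omega),
      udBesselAmp_of_nonneg (by omega), max_eq_left (by push_cast; nlinarith)]
    push_cast
    constructor <;> nlinarith
  · have hn' : (n : ℝ) ≤ 0 := by exact_mod_cast (show n ≤ 0 by omega)
    have hnν : (1 : ℝ) ≤ n + ν := by exact_mod_cast (show (1 : ℤ) ≤ n + ν by omega)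
    rw [udBesselAmp_of_mem_Icc (by omega) (by omega), udBesselAmp_of_mem_Icc (by omega) (by omega),
      udBesselAmp_of_mem_Icc (by omega) (by omega), max_eq_right (by push_cast; nlinarith)]
    push_cast
    constructor <;> nlinarith

lemma udBesselAmp_rel_neg (hQ : Q < 0) :
    udBesselAmp Q ν (-ν + 1) = udBesselAmp Q ν (-ν) - ν * Q ∧
      udBesselAmp Q ν (-ν - 1) + max 0 (((2 * -(ν : ℤ) - 2 : ℤ) : ℝ) * Q) ≤
        udBesselAmp Q ν (-ν) - ν * Q := by
  have hν : (0 : ℝ) ≤ ν := Nat.cast_nonneg ν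
  have hodd : ¬Even (-(ν : ℤ) - 1 + ν) := by rw [show -(ν : ℤ) - 1 + ν = -1 by ring]; decide
  rw [udBesselAmp_of_mem_Icc (by omega) (by omega), udBesselAmp_of_mem_Icc (by omega) (by omega),
    udBesselAmp_of_le (by omega), if_neg hodd, max_eq_right (by push_cast; nlinarith)]
  push_cast
  constructor <;> nlinarith

lemma udBesselAmp_rel_of_lt_neg (hQ : Q < 0) (hn : n < -ν) :
    udBesselAmp Q ν (n - 1) + max 0 (((2 * n - 2 : ℤ) : ℝ) * Q) = udBesselAmp Q ν (n + 1) ∧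
      udBesselAmp Q ν n - ν * Q ≤ udBesselAmp Q ν (n + 1) := by
  have hnν : (n : ℝ) + ν + 1 ≤ 0 := by exact_mod_cast (show n + ν + 1 ≤ 0 by omega)
  have hparSucc : Even (n + 1 + ν) ↔ ¬Even (n + ν) := by
    rw [add_right_comm, Int.even_add_one]
  have hparPred : Even (n - 1 + ν) ↔ ¬Even (n + ν) := by
    rw [sub_add_eq_add_sub, Int.even_sub_one]
  rw [udBesselAmp_of_le (by omega), udBesselAmp_of_le (by omega), udBesselAmp_of_le hn.le,
    max_eq_right (by push_cast; nlinarith)]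
  simp only [hparSucc, hparPred]
  push_cast
  by_cases h : Even (n + ν) <;> simp only [h, not_true, not_false_eq_true, if_true, if_false] <;>
    constructor <;> nlinarith

end

/-- The ultradiscrete Bessel function `(β_n^ν, B_n^ν)` solves the p-ultradiscrete
Bessel equation. -/
theorem ud_bessel_solves (Q : ℝ) (hQ : Q < 0) (ν : ℕ) (β : ℤ → ℤ) (B : ℤ → ℝ)
    (hβ : ∀ n : ℤ, β n =
      if 1 ≤ n then 1
      else if -(ν : ℤ) ≤ n then 1
      else if Even (n + ν) then (((n + ν) / 2).negOnePow : ℤ)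
      else (((n + ν + 1) / 2).negOnePow : ℤ))
    (hB : ∀ n : ℤ, B n =
      if 1 ≤ n then ((n * ν : ℤ) : ℝ) * Q
      else if -(ν : ℤ) ≤ n then ((n * (n + ν - 1) : ℤ) : ℝ) * Q
      else if Even (n + ν) then ((n * (n - 2) - (ν : ℤ) ^ 2 : ℤ) : ℝ) * Q / 2
      else ((n * (n - 2) - (ν : ℤ) ^ 2 + 3 : ℤ) : ℝ) * Q / 2) :
    ∀ n : ℤ,
      max (max (Sud (β (n + 1)) + ((B (n + 1) : ℝ) : EReal))
          (Sud (-β n) + ((B n - ν * Q : ℝ) : EReal)))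
        (Sud (β (n - 1)) +
          ((B (n - 1) + max 0 (((2 * n - 2 : ℤ) : ℝ) * Q) : ℝ) : EReal)) =
      max (max (Sud (-β (n + 1)) + ((B (n + 1) : ℝ) : EReal))
          (Sud (β n) + ((B n - ν * Q : ℝ) : EReal)))
        (Sud (-β (n - 1)) +
          ((B (n - 1) + max 0 (((2 * n - 2 : ℤ) : ℝ) * Q) : ℝ) : EReal)) := by
  obtain rfl : β = udBesselSign ν := funext hβ
  obtain rfl : B = udBesselAmp Q ν := funext hB
  intro n
  rcases lt_trichotomy n (-ν) with hn | rfl | hn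
  · obtain ⟨hca, hba⟩ := udBesselAmp_rel_of_lt_neg hQ hn
    have hsign := udBesselSign_sub_one (ν := ν) (n := n) (by omega)
    rcases udBesselSign_eq_one_or_neg_one (ν := ν) (n + 1) with h | h
    · rw [max_max_Sud_add_eq le_rfl hba hca.le (Or.inl ⟨h, rfl⟩),
        max_max_Sud_add_eq le_rfl hba hca.le (Or.inr (Or.inr ⟨by rw [hsign, h, neg_neg], hca⟩))]
    · rw [max_max_Sud_add_eq le_rfl hba hca.le (Or.inr (Or.inr ⟨by rw [hsign, h, neg_neg], hca⟩)),
        max_max_Sud_add_eq le_rfl hba hca.le (Or.inl ⟨by rw [h, neg_neg], rfl⟩)]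
  · obtain ⟨hab, hcb⟩ := udBesselAmp_rel_neg (ν := ν) hQ
    rw [max_max_Sud_add_eq hab.le le_rfl hcb (Or.inl ⟨udBesselSign_of_ge (by omega), hab⟩),
      max_max_Sud_add_eq hab.le le_rfl hcb (Or.inr (Or.inl ⟨udBesselSign_of_ge (by omega), rfl⟩))]
  · obtain ⟨hcb, hab⟩ := udBesselAmp_rel_of_neg_lt hQ hn
    rw [max_max_Sud_add_eq hab le_rfl hcb.le (Or.inr (Or.inr ⟨udBesselSign_of_ge (by omega), hcb⟩)),
      max_max_Sud_add_eq hab le_rfl hcb.le (Or.inr (Or.inl ⟨udBesselSign_of_ge (by omega), rfl⟩))]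
end
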